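/- If G is a finite simple graph with matching number at most ν and Δ(G) ≤ Δ, then e(G) ≤ Δν + ν. -/

import Mathlib

/-! If some vertex `v` is covered by every maximum matching, deleting the edges at `v` removes at
most `Δ` edges and lowers the matching number, so induction applies. Otherwise Gallai's lemma
applies: a maximum matching `M` leaves at most one vertex of each connected component uncovered.
A component with `k` covered vertices then has `n ≤ k + 1` vertices, so its degree sum is at most
`n · min Δ (n - 1) ≤ (Δ + 1) k`; summing over components, `2 e(G) ≤ (Δ + 1) · 2 |M|`. -/

/-- `M` is a matching in `G`: a set of edges of `G` that are pairwise vertex-disjoint. -/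
def IsMatchingSet {V : Type*} (G : SimpleGraph V) (M : Finset (Sym2 V)) : Prop :=
  (↑M : Set (Sym2 V)) ⊆ G.edgeSet ∧
    ∀ e ∈ M, ∀ f ∈ M, e ≠ f → ∀ v : V, v ∈ e → v ∉ f

open Finset SimpleGraph

section

variable {V : Type*} {G : SimpleGraph V} {M N : Finset (Sym2 V)}

lemma IsMatchingSet.empty (G : SimpleGraph V) : IsMatchingSet G ∅ := ⟨by simp, by simp⟩

lemma IsMatchingSet.subset (h : IsMatchingSet G M) (hNM : N ⊆ M) : IsMatchingSet G N :=
  ⟨(coe_subset.2 hNM).trans h.1, fun e he f hf => h.2 e (hNM he) f (hNM hf)⟩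

def IsMaximumMatching (G : SimpleGraph V) (M : Finset (Sym2 V)) : Prop :=
  IsMatchingSet G M ∧ ∀ N, IsMatchingSet G N → #N ≤ #M

lemma exists_isMaximumMatching [Fintype V] (G : SimpleGraph V) :
    ∃ M, IsMaximumMatching G M := by
  classical
  obtain ⟨M, hM, hmax⟩ := exists_max_image {M | IsMatchingSet G M} card
    ⟨∅, by simpa using IsMatchingSet.empty G⟩
  exact ⟨M, (mem_filter.1 hM).2, fun N hN => hmax N (by simpa using hN)⟩

section MatchedVertices

variable [DecidableEq V] {t u v w x y : V}

def matchedVerts (M : Finset (Sym2 V)) : Finset V := M.biUnion Sym2.toFinset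

@[simp]
lemma mem_matchedVerts : v ∈ matchedVerts M ↔ ∃ e ∈ M, v ∈ e := by
  simp [matchedVerts]

lemma card_matchedVerts_le (M : Finset (Sym2 V)) : #(matchedVerts M) ≤ 2 * #M := by
  refine card_biUnion_le.trans ?_
  rw [mul_comm, ← smul_eq_mul, ← sum_const]
  exact sum_le_sum fun e _ => by rw [Sym2.card_toFinset]; split_ifs <;> omega

lemma matchedVerts_insert (x y : V) (M : Finset (Sym2 V)) :
    matchedVerts (insert s(x, y) M) = insert x (insert y (matchedVerts M)) := by
  ext; simp [or_assoc]

lemma card_insert_of_notMem_matchedVerts (hx : x ∉ matchedVerts M) :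
    #(insert s(x, y) M) = #M + 1 :=
  card_insert_of_notMem fun h => hx (mem_matchedVerts.2 ⟨_, h, Sym2.mem_mk_left x y⟩)

namespace IsMatchingSet

lemma insert_edge (h : IsMatchingSet G M) (hxy : G.Adj x y) (hx : x ∉ matchedVerts M)
    (hy : y ∉ matchedVerts M) : IsMatchingSet G (insert s(x, y) M) := by
  refine ⟨by simpa [Set.insert_subset_iff] using ⟨hxy, h.1⟩, ?_⟩
  simp only [mem_matchedVerts, not_exists, not_and] at hx hy
  intro e he f hf hef v hve hvf
  rcases mem_insert.1 he with rfl | he' <;> rcases mem_insert.1 hf with rfl | hf'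
  · exact hef rfl
  · rcases Sym2.mem_iff.1 hve with rfl | rfl
    exacts [hx f hf' hvf, hy f hf' hvf]
  · rcases Sym2.mem_iff.1 hvf with rfl | rfl
    exacts [hx e he' hve, hy e he' hve]
  · exact h.2 e he' f hf' hef v hve hvf

lemma matchedVerts_erase (h : IsMatchingSet G M) (he : s(x, y) ∈ M) :
    matchedVerts (M.erase s(x, y)) = matchedVerts M \ {x, y} := by
  ext v
  simp only [mem_matchedVerts, mem_erase, mem_sdiff, mem_insert, mem_singleton]
  constructor
  · rintro ⟨f, ⟨hfe, hf⟩, hvf⟩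
    refine ⟨⟨f, hf, hvf⟩, ?_⟩
    rintro (rfl | rfl)
    exacts [h.2 _ he f hf (Ne.symm hfe) v (Sym2.mem_mk_left _ _) hvf,
      h.2 _ he f hf (Ne.symm hfe) v (Sym2.mem_mk_right _ _) hvf]
  · rintro ⟨⟨f, hf, hvf⟩, hvxy⟩
    exact ⟨f, ⟨by rintro rfl; exact hvxy (Sym2.mem_iff.1 hvf), hf⟩, hvf⟩

lemma of_deleteIncidenceSet (h : IsMatchingSet (G.deleteIncidenceSet v) M) :
    IsMatchingSet G M ∧ v ∉ matchedVerts M := by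
  rw [IsMatchingSet, edgeSet_deleteIncidenceSet] at h
  refine ⟨⟨h.1.trans Set.sdiff_subset, h.2⟩, fun hv => ?_⟩
  obtain ⟨e, he, hve⟩ := mem_matchedVerts.1 hv
  exact (h.1 he).2 ⟨(h.1 he).1, hve⟩

end IsMatchingSet

/-- The two possible ends of the `M`-`N`-alternating path that starts at `t` with an `M`-edge:
either it ends after an `M`-edge, and `N` can be augmented along it, or it ends at a vertex `y`
after an `N`-edge, and switching `M` along it uncovers `t` and covers `y` instead. -/
def AugmentsOrShifts (G : SimpleGraph V) (M N : Finset (Sym2 V)) (t : V) : Prop :=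
  (∃ K, IsMatchingSet G K ∧ #K = #N + 1 ∧ matchedVerts K ⊆ matchedVerts M ∪ matchedVerts N) ∨
    ∃ M' y, IsMatchingSet G M' ∧ #M' = #M ∧ y ∉ matchedVerts M ∧ y ∈ matchedVerts N ∧
      matchedVerts M' = insert y ((matchedVerts M).erase t)

lemma AugmentsOrShifts.of_erase {a b : V} (hM : IsMatchingSet G M) (hN : IsMatchingSet G N)
    (he : s(t, a) ∈ M) (hf : s(a, b) ∈ N) (htN : t ∉ matchedVerts N) (hbM : b ∈ matchedVerts M)
    (h : AugmentsOrShifts G (M.erase s(t, a)) (N.erase s(a, b)) b) :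
    AugmentsOrShifts G M N t := by
  have htM : t ∈ matchedVerts M := mem_matchedVerts.2 ⟨_, he, Sym2.mem_mk_left t a⟩
  have haM : a ∈ matchedVerts M := mem_matchedVerts.2 ⟨_, he, Sym2.mem_mk_right t a⟩
  have hbN : b ∈ matchedVerts N := mem_matchedVerts.2 ⟨_, hf, Sym2.mem_mk_right a b⟩
  rw [AugmentsOrShifts, hM.matchedVerts_erase he, hN.matchedVerts_erase hf] at h
  rcases h with ⟨K, hK, hKc, hKsub⟩ | ⟨M', y, hM', hM'c, hyM, hyN, hM'v⟩
  · have htK : t ∉ matchedVerts K := fun h => by simpa [htN] using hKsub h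
    have haK : a ∉ matchedVerts K := fun h => by simpa using hKsub h
    refine .inl ⟨_, hK.insert_edge (hM.1 he) htK haK, ?_, ?_⟩
    · rw [card_insert_of_notMem_matchedVerts htK, hKc, card_erase_add_one hf]
    · rw [matchedVerts_insert]
      exact insert_subset (mem_union_left _ htM) <| insert_subset (mem_union_left _ haM) <|
        hKsub.trans <| union_subset_union sdiff_subset sdiff_subset
  · simp only [mem_sdiff, mem_insert, mem_singleton, not_or, not_and, not_not] at hyM hyN
    have hyt : y ≠ t := by rintro rfl; exact htN hyN.1
    have haM' : a ∉ matchedVerts M' := by rw [hM'v]; grind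
    have hbM' : b ∉ matchedVerts M' := by rw [hM'v]; grind
    refine .inr ⟨_, y, hM'.insert_edge (hN.1 hf) haM' hbM', ?_, fun h => hyN.2.1 (hyM h hyt),
      hyN.1, ?_⟩
    · rw [card_insert_of_notMem_matchedVerts haM', hM'c, card_erase_add_one he]
    · have hbt : b ≠ t := by rintro rfl; exact htN hbN
      have hta : t ≠ a := (hM.1 he).ne
      rw [matchedVerts_insert, hM'v]
      ext v
      simp only [mem_insert, mem_sdiff, mem_erase, mem_singleton]
      grind

theorem IsMatchingSet.augmentsOrShifts (hM : IsMatchingSet G M) (hN : IsMatchingSet G N)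
    (htM : t ∈ matchedVerts M) (htN : t ∉ matchedVerts N) : AugmentsOrShifts G M N t := by
  induction M using Finset.strongInduction generalizing N t with
  | H M ih =>
  obtain ⟨_, he, hte⟩ := mem_matchedVerts.1 htM
  obtain ⟨a, rfl⟩ := Sym2.mem_iff_exists.1 hte
  have hta : G.Adj t a := hM.1 he
  have haM : a ∈ matchedVerts M := mem_matchedVerts.2 ⟨_, he, Sym2.mem_mk_right t a⟩
  by_cases haN : a ∉ matchedVerts N
  · refine .inl ⟨_, hN.insert_edge hta htN haN, card_insert_of_notMem_matchedVerts htN, ?_⟩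
    rw [matchedVerts_insert]
    exact insert_subset (mem_union_left _ htM) <| insert_subset (mem_union_left _ haM)
      subset_union_right
  obtain ⟨_, hf, haf⟩ := mem_matchedVerts.1 (not_not.1 haN)
  obtain ⟨b, rfl⟩ := Sym2.mem_iff_exists.1 haf
  have hab : G.Adj a b := hN.1 hf
  have hbN : b ∈ matchedVerts N := mem_matchedVerts.2 ⟨_, hf, Sym2.mem_mk_right a b⟩
  have hbt : b ≠ t := by rintro rfl; exact htN hbN
  have hM₁ := hM.matchedVerts_erase he
  by_cases hbM : b ∉ matchedVerts M
  · refine .inr ⟨insert s(a, b) (M.erase s(t, a)), b, (hM.subset (erase_subset _ _)).insert_edge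
      hab (by simp [hM₁]) (by simp [hM₁, hbM]), ?_, hbM, hbN, ?_⟩
    · rw [card_insert_of_notMem_matchedVerts (by simp [hM₁]), card_erase_add_one he]
    · rw [matchedVerts_insert, hM₁]
      ext v
      simp only [mem_insert, mem_sdiff, mem_erase, mem_singleton]
      grind
  refine .of_erase hM hN he hf htN (not_not.1 hbM) <|
    ih _ (erase_ssubset he) (hM.subset (erase_subset _ _)) (hN.subset (erase_subset _ _)) ?_ ?_
  · simp [hM₁, not_not.1 hbM, hbt, hab.ne.symm]
  · simp [hN.matchedVerts_erase hf]

namespace IsMaximumMatching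

lemma not_adj (hM : IsMaximumMatching G M) (hu : u ∉ matchedVerts M)
    (hw : w ∉ matchedVerts M) : ¬ G.Adj u w := fun huw => by
  have := hM.2 _ (hM.1.insert_edge huw hu hw)
  rw [card_insert_of_notMem_matchedVerts hu] at this
  omega

/-- Gallai's lemma. Along a walk `u, t, …, w`, shifting `M` away from `t` leaves `t` and one of
`u`, `w` uncovered: not `u`, since `u` is adjacent to `t`, so `w`, and the walk gets shorter. -/
theorem eq_of_reachable (hmiss : ∀ v, ∃ N, IsMaximumMatching G N ∧ v ∉ matchedVerts N)
    (hM : IsMaximumMatching G M) (huw : G.Reachable u w) (hu : u ∉ matchedVerts M)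
    (hw : w ∉ matchedVerts M) : u = w := by
  obtain ⟨p⟩ := huw
  induction p generalizing M with
  | nil => rfl
  | @cons u t w hut q ih =>
    by_cases htM : t ∉ matchedVerts M
    · exact absurd hut (hM.not_adj hu htM)
    obtain ⟨N, hN, htN⟩ := hmiss t
    rcases hM.1.augmentsOrShifts hN.1 (not_not.1 htM) htN with
      ⟨K, hK, hKc, -⟩ | ⟨M', y, hM', hM'c, hyM, -, hM'v⟩
    · have := hN.2 K hK
      omega
    have hM'max : IsMaximumMatching G M' := ⟨hM', fun K hK => hM'c ▸ hM.2 K hK⟩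
    have htM' : t ∉ matchedVerts M' := by rw [hM'v]; grind
    by_cases huM' : u ∉ matchedVerts M'
    · exact absurd hut (hM'max.not_adj huM' htM')
    by_cases hwM' : w ∉ matchedVerts M'
    · exact absurd (ih hM'max htM' hwM') (by rintro rfl; exact htM hw)
    rw [hM'v] at huM' hwM'
    grind

end IsMaximumMatching

end MatchedVertices

lemma mul_min_le_add_one_mul {n k Δ : ℕ} (h : n ≤ k + 1) : n * min Δ (n - 1) ≤ (Δ + 1) * k := by
  rcases Nat.lt_or_ge n (k + 1) with h' | h'
  · nlinarith [min_le_left Δ (n - 1)]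
  obtain rfl : n = k + 1 := by omega
  rw [Nat.add_sub_cancel]
  rcases le_total Δ k with hΔ | hΔ
  · rw [min_eq_left hΔ]; nlinarith
  · rw [min_eq_right hΔ]; nlinarith

namespace SimpleGraph

variable [Fintype V] [DecidableEq V] [DecidableRel G.Adj] {C : Type*} [DecidableEq C]
  {κ : V → C} {A : Finset V} {Δ : ℕ}

lemma sum_degree_fiber_le (hκ : ∀ u w, G.Adj u w → κ u = κ w)
    (hA : ∀ u w, κ u = κ w → u ∉ A → w ∉ A → u = w) (hdeg : ∀ v, G.degree v ≤ Δ) (c : C) :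
    ∑ v with κ v = c, G.degree v ≤ (Δ + 1) * #{v ∈ A | κ v = c} := by
  set S : Finset V := {v | κ v = c}
  have hS : #S ≤ #{v ∈ A | κ v = c} + 1 := by
    have hout : #{v ∈ S | v ∉ A} ≤ 1 := card_le_one.2 fun u hu w hw => by
      simp only [S, mem_filter, mem_univ, true_and] at hu hw
      exact hA u w (hu.1.trans hw.1.symm) hu.2 hw.2
    have hin : {v ∈ S | v ∈ A} = {v ∈ A | κ v = c} := by ext; simp [S, and_comm]
    have := card_filter_add_card_filter_not (s := S) (· ∈ A)
    rw [hin] at this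
    omega
  have hdegS : ∀ v ∈ S, G.degree v ≤ min Δ (#S - 1) := fun v hv => by
    refine le_min (hdeg v) ?_
    rw [← card_erase_of_mem hv]
    refine card_le_card fun w hw => ?_
    rw [mem_neighborFinset] at hw
    simp only [S, mem_erase, mem_filter, mem_univ, true_and] at hv ⊢
    exact ⟨hw.ne.symm, (hκ v w hw).symm.trans hv⟩
  calc ∑ v ∈ S, G.degree v ≤ #S * min Δ (#S - 1) := (sum_le_sum hdegS).trans_eq (by simp)
    _ ≤ (Δ + 1) * #{v ∈ A | κ v = c} := mul_min_le_add_one_mul hS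

theorem two_mul_card_edgeFinset_le [Fintype C] (hκ : ∀ u w, G.Adj u w → κ u = κ w)
    (hA : ∀ u w, κ u = κ w → u ∉ A → w ∉ A → u = w) (hdeg : ∀ v, G.degree v ≤ Δ) :
    2 * #G.edgeFinset ≤ (Δ + 1) * #A := by
  rw [← sum_degrees_eq_twice_card_edges, ← sum_fiberwise univ κ,
    card_eq_sum_card_fiberwise (f := κ) (t := univ) (by simp), mul_sum]
  exact sum_le_sum fun c _ => sum_degree_fiber_le hκ hA hdeg c

end SimpleGraph

theorem IsMaximumMatching.card_edgeFinset_le [Fintype V] [DecidableEq V] [DecidableRel G.Adj]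
    {Δ : ℕ} (hM : IsMaximumMatching G M) (hdeg : ∀ v, G.degree v ≤ Δ) :
    #G.edgeFinset ≤ (Δ + 1) * #M := by
  induction hk : #M using Nat.strong_induction_on generalizing G M with
  | _ k ih =>
  subst hk
  by_cases hmiss : ∀ v, ∃ N, IsMaximumMatching G N ∧ v ∉ matchedVerts N
  · classical
    have := two_mul_card_edgeFinset_le (A := matchedVerts M)
      (fun _ _ => ConnectedComponent.connectedComponentMk_eq_of_adj)
      (fun u w huw => hM.eq_of_reachable hmiss (ConnectedComponent.exact huw)) hdeg
    have := card_matchedVerts_le M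
    nlinarith
  push Not at hmiss
  obtain ⟨v, hv⟩ := hmiss
  obtain ⟨M', hM'⟩ := exists_isMaximumMatching (G.deleteIncidenceSet v)
  obtain ⟨hM'G, hvM'⟩ := hM'.1.of_deleteIncidenceSet
  have hlt : #M' < #M := lt_of_le_of_ne (hM.2 M' hM'G) fun h =>
    hvM' (hv M' ⟨hM'G, fun N hN => h ▸ hM.2 N hN⟩)
  have hG' := ih _ hlt hM'
    (fun u => (degree_le_of_le (G.deleteIncidenceSet_le v)).trans (hdeg u)) rfl
  calc #G.edgeFinset = #(G.deleteIncidenceSet v).edgeFinset + G.degree v := by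
        have := G.degree_le_card_edgeFinset v
        rw [card_edgeFinset_deleteIncidenceSet]
        omega
    _ ≤ (Δ + 1) * #M' + Δ := add_le_add hG' (hdeg v)
    _ ≤ (Δ + 1) * #M := by nlinarith

end

theorem stmt_2_general {V : Type*} [Fintype V] (G : SimpleGraph V)
    (ν Δ : ℕ)
    (hmatch : ∀ M : Finset (Sym2 V), IsMatchingSet G M → M.card ≤ ν)
    (hdeg : ∀ v : V, (G.neighborSet v).ncard ≤ Δ) :
    G.edgeSet.ncard ≤ Δ * ν + ν := by
  classical
  obtain ⟨M, hM⟩ := exists_isMaximumMatching G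
  have hdeg' (v : V) : G.degree v ≤ Δ := by
    rw [← G.card_neighborSet_eq_degree, ← Nat.card_eq_fintype_card, Nat.card_coe_set_eq]
    exact hdeg v
  calc G.edgeSet.ncard = #G.edgeFinset := by rw [← G.coe_edgeFinset, Set.ncard_coe_finset]
    _ ≤ (Δ + 1) * #M := hM.card_edgeFinset_le hdeg'
    _ ≤ (Δ + 1) * ν := Nat.mul_le_mul_left _ (hmatch M hM.1)
    _ = Δ * ν + ν := by ring

/-- A graph with matching number at most `ν` and maximum degree at most `Δ`
has at most `Δν + ν` edges. -/
theorem stmt_2 {V : Type*} [Fintype V] [DecidableEq V] (G : SimpleGraph V)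
    (ν Δ : ℕ)
    (hmatch : ∀ M : Finset (Sym2 V), IsMatchingSet G M → M.card ≤ ν)
    (hdeg : ∀ v : V, (G.neighborSet v).ncard ≤ Δ) :
    G.edgeSet.ncard ≤ Δ * ν + ν :=
  stmt_2_general G ν Δ hmatch hdeg
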